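/- arXiv:2001.00256 — 3 statements merged into one kernel-verified Lean document; each statement's English description precedes it below -/
import Mathlib

section
/- Every real polynomial q(u,v,t) that is a sum of squares of polynomials and satisfies q(u,v,t) = q(v,u,t) for all u,v,t can be written as s1(u,v,t) + (u−v)^2 · s2(u,v,t), where s1 and s2 are sums of squares of polynomials invariant under swapping u and v. -/
/-! Let τ swap the variables i and j and write q = ∑ pₖ². Since τ q = q,
q = ½ ∑ (pₖ² + (τ pₖ)²) = ∑ (½ (pₖ + τ pₖ))² + (½ (pₖ - τ pₖ))².
The first summands are τ-invariant. The second are τ-anti-invariant, and an anti-invariant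
polynomial is divisible by Xᵢ - Xⱼ, which τ negates, so the quotient is τ-invariant. -/

open MvPolynomial

namespace MvPolynomial

variable {σ R : Type*} [CommRing R]

theorem X_sub_X_ne_zero [Nontrivial R] {i j : σ} (hij : i ≠ j) :
    (X i - X j : MvPolynomial σ R) ≠ 0 :=
  sub_ne_zero.mpr fun h => hij (X_injective h)

theorem C_inv_two_mul_two {K : Type*} [Field K] [NeZero (2 : K)] :
    (C 2⁻¹ : MvPolynomial σ K) * 2 = 1 := by
  rw [← map_ofNat C 2, ← C_mul, inv_mul_cancel₀ two_ne_zero, C_1]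

variable [DecidableEq σ]

theorem rename_swap_rename_swap (i j : σ) (p : MvPolynomial σ R) :
    rename (Equiv.swap i j) (rename (Equiv.swap i j) p) = p := by
  rw [rename_rename, show ⇑(Equiv.swap i j) ∘ ⇑(Equiv.swap i j) = id from
    _root_.funext (Equiv.swap_apply_self i j), rename_id_apply]

theorem rename_swap_X_sub_X (i j : σ) :
    rename (Equiv.swap i j) (X i - X j : MvPolynomial σ R) = -(X i - X j) := by
  simp only [map_sub, rename_X, Equiv.swap_apply_left, Equiv.swap_apply_right, neg_sub]

theorem X_sub_X_dvd_sub_rename_swap (i j : σ) (p : MvPolynomial σ R) :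
    X i - X j ∣ p - rename (Equiv.swap i j) p := by
  induction p using MvPolynomial.induction_on with
  | C a => simp
  | add p q hp hq => simpa only [map_add, add_sub_add_comm] using dvd_add hp hq
  | mul_X p n hp =>
    have hX : X i - X j ∣ (X n - X (Equiv.swap i j n) : MvPolynomial σ R) := by
      rw [Equiv.swap_apply_def]
      split_ifs with hi hj
      · rw [hi]
      · rw [hj]
        exact ⟨-1, by ring⟩
      · rw [sub_self]
        exact dvd_zero _
    have : p * X n - rename (Equiv.swap i j) (p * X n) =
        (p - rename (Equiv.swap i j) p) * X n +
          rename (Equiv.swap i j) p * (X n - X (Equiv.swap i j n)) := by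
      rw [map_mul, rename_X]; ring
    rw [this]
    exact dvd_add (hp.mul_right _) (hX.mul_left _)

theorem exists_rename_swap_eq_and_sub_rename_swap_eq [IsDomain R] {i j : σ} (hij : i ≠ j)
    (p : MvPolynomial σ R) :
    ∃ r, rename (Equiv.swap i j) r = r ∧ p - rename (Equiv.swap i j) p = (X i - X j) * r := by
  obtain ⟨r, hr⟩ := X_sub_X_dvd_sub_rename_swap i j p
  refine ⟨r, ?_, hr⟩
  have h := congrArg (rename (Equiv.swap i j)) hr
  rw [map_sub, rename_swap_rename_swap, ← neg_sub p, hr, map_mul, rename_swap_X_sub_X, neg_mul,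
    neg_inj] at h
  exact (mul_left_cancel₀ (X_sub_X_ne_zero hij) h).symm

def IsSwapSumSq (i j : σ) (q : MvPolynomial σ R) : Prop :=
  ∃ m₁ m₂ : Multiset (MvPolynomial σ R),
    (∀ p ∈ m₁, rename (Equiv.swap i j) p = p) ∧
    (∀ p ∈ m₂, rename (Equiv.swap i j) p = p) ∧
    q = (m₁.map (· ^ 2)).sum + (X i - X j) ^ 2 * (m₂.map (· ^ 2)).sum

theorem isSwapSumSq_zero (i j : σ) : IsSwapSumSq i j (0 : MvPolynomial σ R) :=
  ⟨0, 0, by simp, by simp, by simp⟩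

theorem isSwapSumSq_sq_add_mul_sq {i j : σ} {e r : MvPolynomial σ R}
    (he : rename (Equiv.swap i j) e = e) (hr : rename (Equiv.swap i j) r = r) :
    IsSwapSumSq i j (e ^ 2 + (X i - X j) ^ 2 * r ^ 2) :=
  ⟨{e}, {r}, by simpa using he, by simpa using hr, by simp⟩

theorem IsSwapSumSq.add {i j : σ} {q q' : MvPolynomial σ R} (hq : IsSwapSumSq i j q)
    (hq' : IsSwapSumSq i j q') : IsSwapSumSq i j (q + q') := by
  obtain ⟨m₁, m₂, h₁, h₂, rfl⟩ := hq
  obtain ⟨m₁', m₂', h₁', h₂', rfl⟩ := hq'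
  refine ⟨m₁ + m₁', m₂ + m₂', ?_, ?_, ?_⟩
  · simpa only [Multiset.mem_add, or_imp, forall_and] using ⟨h₁, h₁'⟩
  · simpa only [Multiset.mem_add, or_imp, forall_and] using ⟨h₂, h₂'⟩
  · simp only [Multiset.map_add, Multiset.sum_add]
    ring

section Field

variable {K : Type*} [Field K] [NeZero (2 : K)]

theorem isSwapSumSq_half_sq_add_sq_rename_swap {i j : σ} (hij : i ≠ j) (p : MvPolynomial σ K) :
    IsSwapSumSq i j (C 2⁻¹ * (p ^ 2 + rename (Equiv.swap i j) p ^ 2)) := by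
  obtain ⟨r, hr, hpr⟩ := exists_rename_swap_eq_and_sub_rename_swap_eq hij p
  set c : MvPolynomial σ K := C 2⁻¹
  have hc : rename (Equiv.swap i j) c = c := rename_C _ _
  have hc2 : c * 2 = 1 := C_inv_two_mul_two
  convert isSwapSumSq_sq_add_mul_sq (e := c * (p + rename (Equiv.swap i j) p)) (r := c * r)
    (by rw [map_mul, map_add, hc, rename_swap_rename_swap, add_comm])
    (by rw [map_mul, hc, hr]) using 1
  linear_combination (-(p ^ 2 + rename (Equiv.swap i j) p ^ 2) * c) * hc2 +
    c ^ 2 * (p - rename (Equiv.swap i j) p + (X i - X j) * r) * hpr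

theorem _root_.IsSumSq.isSwapSumSq_half_add_rename_swap {i j : σ} (hij : i ≠ j) {s : MvPolynomial σ K}
    (hs : IsSumSq s) : IsSwapSumSq i j (C 2⁻¹ * (s + rename (Equiv.swap i j) s)) := by
  induction hs with
  | zero => simpa using isSwapSumSq_zero i j
  | sq_add a _ ih =>
    convert (isSwapSumSq_half_sq_add_sq_rename_swap hij a).add ih using 1
    simp only [map_add, map_mul]
    ring

theorem _root_.IsSumSq.isSwapSumSq {i j : σ} (hij : i ≠ j) {q : MvPolynomial σ K} (hq : IsSumSq q)
    (hsymm : rename (Equiv.swap i j) q = q) : IsSwapSumSq i j q := by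
  convert hq.isSwapSumSq_half_add_rename_swap hij using 1
  rw [hsymm, ← two_mul, ← mul_assoc, C_inv_two_mul_two, one_mul]

end Field

end MvPolynomial

theorem stmt_3 (q : MvPolynomial (Fin 3) ℝ) (hsos : IsSumSq q)
    (hsym : rename (Equiv.swap (0 : Fin 3) 1) q = q) :
    ∃ m₁ m₂ : Multiset (MvPolynomial (Fin 3) ℝ),
      (∀ p ∈ m₁, rename (Equiv.swap (0 : Fin 3) 1) p = p) ∧
      (∀ p ∈ m₂, rename (Equiv.swap (0 : Fin 3) 1) p = p) ∧
      q = (m₁.map (· ^ 2)).sum + (X 0 - X 1) ^ 2 * (m₂.map (· ^ 2)).sum :=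
  hsos.isSwapSumSq (by decide) hsym
end

section
/- For all real u, v, t with 0 ≤ u ≤ 4/3, 0 ≤ v ≤ 4/3, and u² + v² − 2t − 16/3 ≥ 0, the function F(u,v,t) = 64/81 + (4/9)uv − (16/27)(u+v) + (9/8)t satisfies F(u,v,t) ≤ −1. -/
theorem stmt_8 (u v t : ℝ) (hu : 0 ≤ u) (hu1 : u ≤ 4 / 3) (hv : 0 ≤ v) (hv1 : v ≤ 4 / 3)
    (ht : 0 ≤ u ^ 2 + v ^ 2 - 2 * t - 16 / 3) :
    64 / 81 + 4 / 9 * (u * v) - 16 / 27 * (u + v) + 9 / 8 * t ≤ -1 := by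
  nlinarith [mul_nonneg (sub_nonneg.2 hu1) (sub_nonneg.2 hv1), mul_nonneg hu hv,
    mul_nonneg hu (sub_nonneg.2 hv1), mul_nonneg hv (sub_nonneg.2 hu1), sq_nonneg (u - v), sq_nonneg (u + v)]
end

section
/- For every integer n ≥ 2 and all real u, v, t with 0 ≤ u ≤ 2n/(n+1), 0 ≤ v ≤ 2n/(n+1), and u² + v² − 2t − 8n/(n+1) ≥ 0, the function F(u,v,t) = 2n/(n+1) − u − v + ((n+1)/(2n))uv + ((n+1)²/(4n))t satisfies F(u,v,t) ≤ −1. -/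
theorem stmt_10 (n : ℕ) (hn : 2 ≤ n) (u v t : ℝ)
    (hu : 0 ≤ u) (hu1 : u ≤ 2 * n / (n + 1)) (hv : 0 ≤ v) (hv1 : v ≤ 2 * n / (n + 1))
    (ht : 0 ≤ u ^ 2 + v ^ 2 - 2 * t - 8 * n / (n + 1)) :
    2 * n / (n + 1) - u - v + (n + 1) / (2 * n) * (u * v)
      + (n + 1) ^ 2 / (4 * n) * t ≤ -1 := by
  have hN : (2:ℝ) ≤ (n:ℝ) := by exact_mod_cast hn
  have h0 : (0:ℝ) < (n:ℝ) := by linarith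
  have h1 : (0:ℝ) < (n:ℝ) + 1 := by linarith
  have hu1' : u * ((n:ℝ) + 1) ≤ 2 * n := (le_div_iff₀ h1).mp hu1
  have hv1' : v * ((n:ℝ) + 1) ≤ 2 * n := (le_div_iff₀ h1).mp hv1
  have ht' : 2 * t * ((n:ℝ)+1) ≤ (u ^ 2 + v ^ 2) * ((n:ℝ)+1) - 8 * n := by
    have h : 8 * (n:ℝ) / ((n:ℝ)+1) ≤ u ^ 2 + v ^ 2 - 2 * t := by linarith
    have h2 := (div_le_iff₀ h1).mp h
    nlinarith
  have key : 2 * (n:ℝ) / (n + 1) - u - v + ((n:ℝ) + 1) / (2 * n) * (u * v)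
      + ((n:ℝ) + 1) ^ 2 / (4 * n) * t
      = (8 * (n:ℝ)^2 - 4 * n * (n + 1) * u - 4 * n * (n + 1) * v
          + 2 * (n + 1)^2 * (u * v) + (n + 1)^3 * t) / (4 * n * (n + 1)) := by
    field_simp
    ring
  rw [key, div_le_iff₀ (by positivity)]
  nlinarith [mul_nonneg (sub_nonneg.2 hu1') (sub_nonneg.2 hv1'),
    mul_nonneg (sub_nonneg.2 hu1') hu, mul_nonneg (sub_nonneg.2 hv1') hv,
    mul_nonneg (sub_nonneg.2 hu1') hv, mul_nonneg (sub_nonneg.2 hv1') hu,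
    mul_le_mul_of_nonneg_left ht' (by positivity : (0:ℝ) ≤ ((n:ℝ)+1)^2),
    mul_nonneg hu hv, sq_nonneg ((n:ℝ)+1), hN]
end
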